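/- Let (A,S) be a 𝔹₂-contraction on a complex Hilbert space H. Then (A, S, 0) is a 𝔓-contraction. -/

import Mathlib

open ContinuousLinearMap

noncomputable section

/-- The operator norm of a 2×2 complex matrix, acting on ℂ² with the Euclidean norm. -/
noncomputable def matOpNorm (M : Matrix (Fin 2) (Fin 2) ℂ) : ℝ :=
  ‖Matrix.toEuclideanCLM (𝕜 := ℂ) M‖

/-- The closed pentablock 𝔓̄ ⊆ ℂ³ : the set of (a₂₁, tr A₀, det A₀) over 2×2 matrices A₀
of operator norm at most 1. -/
def pentablock : Set (ℂ × ℂ × ℂ) :=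
  {x | ∃ M : Matrix (Fin 2) (Fin 2) ℂ, matOpNorm M ≤ 1 ∧ x = (M 1 0, M.trace, M.det)}

/-- The closed biball 𝔹̄₂ ⊆ ℂ². -/
def closedBiball : Set (ℂ × ℂ) :=
  {z | ‖z.1‖ ^ 2 + ‖z.2‖ ^ 2 ≤ 1}

/-- sup of |f| over a subset of ℂ³, for a polynomial f in three variables. -/
noncomputable def supAbs3 (X : Set (ℂ × ℂ × ℂ)) (f : MvPolynomial (Fin 3) ℂ) : ℝ :=
  sSup ((fun z : ℂ × ℂ × ℂ => ‖MvPolynomial.eval ![z.1, z.2.1, z.2.2] f‖) '' X)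

/-- sup of |g| over a subset of ℂ², for a polynomial g in two variables. -/
noncomputable def supAbs2 (X : Set (ℂ × ℂ)) (g : MvPolynomial (Fin 2) ℂ) : ℝ :=
  sSup ((fun z : ℂ × ℂ => ‖MvPolynomial.eval ![z.1, z.2] g‖) '' X)

variable {H : Type*} [NormedAddCommGroup H] [InnerProductSpace ℂ H]

/-- Evaluation f(A,S,P) of a three-variable polynomial at a commuting triple of operators. -/
noncomputable def opEval3 (A S P : H →L[ℂ] H) (f : MvPolynomial (Fin 3) ℂ) : H →L[ℂ] H :=
  ∑ m ∈ f.support, f.coeff m • (A ^ m 0 * S ^ m 1 * P ^ m 2)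

/-- Evaluation g(S,P) of a two-variable polynomial at a commuting pair of operators. -/
noncomputable def opEval2 (S P : H →L[ℂ] H) (g : MvPolynomial (Fin 2) ℂ) : H →L[ℂ] H :=
  ∑ m ∈ g.support, g.coeff m • (S ^ m 0 * P ^ m 1)

/-- A commuting triple (A,S,P) is a 𝔓-contraction if the von Neumann inequality over the
closed pentablock holds for every polynomial in three variables. -/
def IsPContraction (A S P : H →L[ℂ] H) : Prop :=
  Commute A S ∧ Commute A P ∧ Commute S P ∧
    ∀ f : MvPolynomial (Fin 3) ℂ, ‖opEval3 A S P f‖ ≤ supAbs3 pentablock f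

/-- A commuting pair is a 𝔹₂-contraction if the von Neumann inequality over the
closed biball holds for every polynomial in two variables. -/
def IsB2Contraction (A B : H →L[ℂ] H) : Prop :=
  Commute A B ∧
    ∀ g : MvPolynomial (Fin 2) ℂ, ‖opEval2 A B g‖ ≤ supAbs2 closedBiball g


/-!
Since `P = 0`, the operator `f(A, S, 0)` is `g(A, S)` for the two-variable polynomial
`g = f(z₁, z₂, 0)`, so the 𝔹₂ von Neumann inequality bounds it by `sup_{𝔹̄₂} |g|`.
The biball embeds into the pentablock by `(z₁, z₂) ↦ (z₁, z₂, 0)`, realised by the matrix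
`!![0, 0; z₁, z₂]`, whose operator norm is `√(|z₁|² + |z₂|²)`; hence `sup_{𝔹̄₂} |g| ≤ sup_{𝔓̄} |f|`,
the latter supremum being finite because the pentablock is compact.
-/

open MvPolynomial

section OperatorEvaluation

variable (A S P : H →L[ℂ] H)

lemma opEval2_monomial (m : Fin 2 →₀ ℕ) (c : ℂ) :
    opEval2 A S (monomial m c) = c • (A ^ m 0 * S ^ m 1) := by
  by_cases hc : c = 0
  · simp [opEval2, hc]
  · simp [opEval2, support_monomial, hc]

lemma opEval3_monomial (m : Fin 3 →₀ ℕ) (c : ℂ) :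
    opEval3 A S P (monomial m c) = c • (A ^ m 0 * S ^ m 1 * P ^ m 2) := by
  by_cases hc : c = 0
  · simp [opEval3, hc]
  · simp [opEval3, support_monomial, hc]

lemma opEval2_eq_sum (f : MvPolynomial (Fin 2) ℂ) :
    opEval2 A S f = (AddMonoidAlgebra.coeff f).sum fun m c => c • (A ^ m 0 * S ^ m 1) := by
  rw [opEval2, sum_def]

lemma opEval3_eq_sum (f : MvPolynomial (Fin 3) ℂ) :
    opEval3 A S P f =
      (AddMonoidAlgebra.coeff f).sum fun m c => c • (A ^ m 0 * S ^ m 1 * P ^ m 2) := by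
  rw [opEval3, sum_def]

lemma opEval2_add (f g : MvPolynomial (Fin 2) ℂ) :
    opEval2 A S (f + g) = opEval2 A S f + opEval2 A S g := by
  simp only [opEval2_eq_sum, AddMonoidAlgebra.coeff_add]
  exact Finsupp.sum_add_index' (fun _ => zero_smul ℂ _) (fun _ _ _ => add_smul _ _ _)

lemma opEval3_add (f g : MvPolynomial (Fin 3) ℂ) :
    opEval3 A S P (f + g) = opEval3 A S P f + opEval3 A S P g := by
  simp only [opEval3_eq_sum, AddMonoidAlgebra.coeff_add]
  exact Finsupp.sum_add_index' (fun _ => zero_smul ℂ _) (fun _ _ _ => add_smul _ _ _)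

lemma opEval2_C_mul_X_pow_mul_X_pow (c : ℂ) (a b : ℕ) :
    opEval2 A S (C c * (X 0 ^ a * X 1 ^ b)) = c • (A ^ a * S ^ b) := by
  rw [X_pow_eq_monomial, X_pow_eq_monomial, monomial_mul, C_mul_monomial, opEval2_monomial]
  simp

end OperatorEvaluation

def evalThirdZero : MvPolynomial (Fin 3) ℂ →ₐ[ℂ] MvPolynomial (Fin 2) ℂ :=
  aeval ![X 0, X 1, 0]

lemma eval_evalThirdZero (z₁ z₂ : ℂ) (f : MvPolynomial (Fin 3) ℂ) :
    eval ![z₁, z₂] (evalThirdZero f) = eval ![z₁, z₂, 0] f := by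
  rw [← coe_aeval_eq_eval, ← coe_aeval_eq_eval]
  change ((aeval ![z₁, z₂]).comp (aeval ![X 0, X 1, 0])) f = _
  have hvals : (fun i : Fin 3 => aeval ![z₁, z₂] (![X 0, X 1, 0] i : MvPolynomial (Fin 2) ℂ)) =
      ![z₁, z₂, 0] := by
    funext i; fin_cases i <;> simp
  rw [comp_aeval, hvals]
  rfl

lemma opEval3_zero_right (A S : H →L[ℂ] H) (f : MvPolynomial (Fin 3) ℂ) :
    opEval3 A S 0 f = opEval2 A S (evalThirdZero f) := by
  induction f using MvPolynomial.induction_on' with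
  | monomial m c =>
    rw [opEval3_monomial, evalThirdZero, aeval_monomial,
      Finsupp.prod_fintype _ _ (fun _ => pow_zero _), Fin.prod_univ_three]
    simp only [Matrix.cons_val_zero, Matrix.cons_val_one, Matrix.cons_val_two, Matrix.head_cons,
      Matrix.tail_cons, algebraMap_eq]
    rcases eq_or_ne (m 2) 0 with hm | hm
    · rw [hm, pow_zero, pow_zero, mul_one, mul_one, opEval2_C_mul_X_pow_mul_X_pow]
    · simp [zero_pow hm, opEval2]
  | add p q hp hq => rw [opEval3_add, hp, hq, map_add, opEval2_add]

open scoped Matrix Matrix.Norms.L2Operator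

lemma norm_vecCons_zero_ofReal (r : ℝ) (hr : 0 ≤ r) :
    ‖(![0, (r : ℂ)] : Fin 2 → ℂ)‖ = r := by
  refine le_antisymm ((pi_norm_le_iff_of_nonneg hr).2 fun i => ?_) ?_
  · fin_cases i <;> simp [abs_of_nonneg hr, hr]
  · simpa [abs_of_nonneg hr] using norm_le_pi_norm (![0, (r : ℂ)] : Fin 2 → ℂ) 1

/-- `M Mᴴ` is diagonal, so the C⋆-identity computes the norm. -/
lemma l2_opNorm_lowerRow (z₁ z₂ : ℂ) :
    ‖!![0, 0; z₁, z₂]‖ = √(‖z₁‖ ^ 2 + ‖z₂‖ ^ 2) := by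
  set M : Matrix (Fin 2) (Fin 2) ℂ := !![0, 0; z₁, z₂]
  have hr : 0 ≤ ‖z₁‖ ^ 2 + ‖z₂‖ ^ 2 := by positivity
  have hMM : M * Mᴴ = Matrix.diagonal ![0, ((‖z₁‖ ^ 2 + ‖z₂‖ ^ 2 : ℝ) : ℂ)] := by
    ext i j
    fin_cases i <;> fin_cases j <;> simp [M, Matrix.mul_apply, Fin.sum_univ_two, RCLike.mul_conj]
  have hcstar := Matrix.l2_opNorm_conjTranspose_mul_self Mᴴ
  rw [Matrix.conjTranspose_conjTranspose, hMM, Matrix.l2_opNorm_diagonal,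
    Matrix.l2_opNorm_conjTranspose, norm_vecCons_zero_ofReal _ hr] at hcstar
  rw [eq_comm, Real.sqrt_eq_iff_mul_self_eq hr (norm_nonneg _), hcstar]

lemma mem_pentablock_of_mem_closedBiball {z : ℂ × ℂ} (hz : z ∈ closedBiball) :
    (z.1, z.2, 0) ∈ pentablock := by
  refine ⟨!![0, 0; z.1, z.2], ?_, by simp [Matrix.trace_fin_two, Matrix.det_fin_two]⟩
  change ‖!![0, 0; z.1, z.2]‖ ≤ 1
  rw [l2_opNorm_lowerRow]
  exact Real.sqrt_le_one.mpr hz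

lemma isCompact_pentablock : IsCompact pentablock := by
  have himage : pentablock =
      (fun M : Matrix (Fin 2) (Fin 2) ℂ => (M 1 0, M.trace, M.det)) '' Metric.closedBall 0 1 := by
    ext x
    simp [pentablock, matOpNorm, ← Matrix.cstar_norm_def, eq_comm]
  rw [himage]
  -- the L2-operator norm on matrices induces the entrywise topology, so `fun_prop` applies
  exact (isCompact_closedBall 0 1).image (by fun_prop)

lemma supAbs2_evalThirdZero_le (f : MvPolynomial (Fin 3) ℂ) :
    supAbs2 closedBiball (evalThirdZero f) ≤ supAbs3 pentablock f := by
  have hcont : Continuous fun z : ℂ × ℂ × ℂ => ‖eval ![z.1, z.2.1, z.2.2] f‖ :=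
    ((continuous_eval f).comp (by fun_prop)).norm
  refine csSup_le_csSup (isCompact_pentablock.bddAbove_image hcont.continuousOn)
    ⟨_, 0, by simp [closedBiball], rfl⟩ ?_
  rintro _ ⟨z, hz, rfl⟩
  exact ⟨(z.1, z.2, 0), mem_pentablock_of_mem_closedBiball hz, by simp [eval_evalThirdZero]⟩

theorem stmt10_general {H : Type*} [NormedAddCommGroup H] [InnerProductSpace ℂ H]
    (A S : H →L[ℂ] H) (h : IsB2Contraction A S) :
    IsPContraction A S (0 : H →L[ℂ] H) := by
  obtain ⟨hAS, hvonNeumann⟩ := h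
  refine ⟨hAS, .zero_right A, .zero_right S, fun f => ?_⟩
  rw [opEval3_zero_right]
  exact (hvonNeumann _).trans (supAbs2_evalThirdZero_le f)

theorem stmt10 {H : Type*} [NormedAddCommGroup H] [InnerProductSpace ℂ H] [CompleteSpace H]
    (A S : H →L[ℂ] H) (h : IsB2Contraction A S) :
    IsPContraction A S (0 : H →L[ℂ] H) :=
  stmt10_general A S h
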